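/- Let L : ℕ → ℝ with L_n ≥ 1 for all n and B_N = Σ_{n=0}^N L_n. Assume: (i) there exist c > 1, N₀ with B_{2N} ≤ c·B_N for all N > N₀; (ii) B_N ∼ N^{d_H} with 2 ≤ d_H < 4; (iii) η is a sequence of functions on (0,1), each differentiable with η_n′(x) ≤ 0, satisfying the recursion η_n(x) = (η_{n+1}(x) + 1/L_n)/(1 + x·L_n·η_{n+1}(x)) and 1/L_n ≤ η_n(x) ≤ x^{−1/2} for all n, x; (iv) for every sufficiently large k there exists x_k ∈ (0,1) with x_k·F_{k−1}(x_k) = 1, and x_k → 0 as k → ∞; (v) |η_0′(x)| ∼ x^{−2+d_s/2} as x → 0 for some real d_s. Then d_s ≤ d_H. -/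

import Mathlib

/-- `X_N ∼ N^a`: there are constants `0 < c₁ ≤ c₂`, `c₁' ≤ c₂'` and `N₀` with
`c₁ N^a (log N)^{c₁'} ≤ X_N ≤ c₂ N^a (log N)^{c₂'}` for all `N > N₀`. -/
def NAsymp (X : ℕ → ℝ) (a : ℝ) : Prop :=
  ∃ c₁ c₂ c₁' c₂' : ℝ, ∃ N₀ : ℕ, 0 < c₁ ∧ c₁ ≤ c₂ ∧ c₁' ≤ c₂' ∧
    ∀ N : ℕ, N₀ < N →
      c₁ * (N:ℝ)^a * (Real.log N)^c₁' ≤ X N ∧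
      X N ≤ c₂ * (N:ℝ)^a * (Real.log N)^c₂'

/-- `f(x) ∼ x^a` as `x → 0`: there are constants `0 < c₁ ≤ c₂`, `c₁' ≤ c₂'` and
`x₀ ∈ (0,1)` with `c₁ x^a (log(1/x))^{c₁'} ≤ f(x) ≤ c₂ x^a (log(1/x))^{c₂'}`
for all `0 < x < x₀`. -/
def ZeroAsymp (f : ℝ → ℝ) (a : ℝ) : Prop :=
  ∃ c₁ c₂ c₁' c₂' x₀ : ℝ, 0 < c₁ ∧ c₁ ≤ c₂ ∧ c₁' ≤ c₂' ∧ 0 < x₀ ∧ x₀ < 1 ∧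
    ∀ x : ℝ, 0 < x → x < x₀ →
      c₁ * x^a * (Real.log (1/x))^c₁' ≤ f x ∧
      f x ≤ c₂ * x^a * (Real.log (1/x))^c₂'

/-!
Fix a large `k` and let `x = x_k`, so that `x * F_{k-1}(x) = 1`. Differentiating the recursion
gives `-η_n' = (1 - x) / D_n ^ 2 * (-η_{n+1}') + η_n L_n η_{n+1} / D_n` with
`D_n = 1 + x L_n η_{n+1}`, and `D_n ≤ 2` for `n < k`. Unrolling it `k` times yields
`-η_0'(x) ≳ (1 - x) ^ k * ∑_{m<k} L_m η_{m+1} ^ 2`, which by Cauchy–Schwarz and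
`x * F_{k-1}(x) = 1` is `≳ (1 - x) ^ k / (x ^ 2 B_{k-1})`.
Iterating the recursion for `η` itself bounds `η_n(x)` below by `e⁻¹ ∑_{n ≤ m < k} 1 / L_m`; with
volume doubling and Cauchy–Schwarz this forces `x k ^ 2 ≲ 1`, hence `(1 - x) ^ k ≥ 1 / 2` and
`B_k ≲ x ^ (-d_H / 2)` up to logarithms. So `x ^ (-2 + d_s / 2) ≳ |η_0'(x)| ≳ x ^ (-2 + d_H / 2)`
up to logarithms along `x_k → 0`, which forces `d_s ≤ d_H`.
-/

open Real Finset Filter Topology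

theorem prod_mul_sum_le_of_mul_add_le {q a b : ℕ → ℝ} (hq₀ : ∀ n, 0 ≤ q n) (hq₁ : ∀ n, q n ≤ 1)
    (ha : ∀ n, 0 ≤ a n) (hb : ∀ n, 0 ≤ b n) (h : ∀ n, q n * a (n + 1) + b n ≤ a n) (N : ℕ) :
    (∏ j ∈ range N, q j) * ∑ m ∈ range N, b m ≤ a 0 := by
  have hunroll : ∀ N, (∏ j ∈ range N, q j) * (∑ m ∈ range N, b m + a N) ≤ a 0 := by
    intro N
    induction N with
    | zero => simp
    | succ N ih =>
      have hB : 0 ≤ ∑ m ∈ range N, b m + b N := add_nonneg (sum_nonneg fun m _ => hb m) (hb N)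
      calc (∏ j ∈ range (N + 1), q j) * (∑ m ∈ range (N + 1), b m + a (N + 1))
          = (∏ j ∈ range N, q j) * (q N * (∑ m ∈ range N, b m + b N) + q N * a (N + 1)) := by
            rw [prod_range_succ, sum_range_succ]; ring
        _ ≤ (∏ j ∈ range N, q j) * (∑ m ∈ range N, b m + a N) := by
            gcongr ?_ * ?_
            · exact prod_nonneg fun j _ => hq₀ j
            · nlinarith [h N, hq₁ N]
        _ ≤ a 0 := ih
  calc (∏ j ∈ range N, q j) * ∑ m ∈ range N, b m
      ≤ (∏ j ∈ range N, q j) * (∑ m ∈ range N, b m + a N) :=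
        mul_le_mul_of_nonneg_left (le_add_of_nonneg_right (ha N)) (prod_nonneg fun j _ => hq₀ j)
    _ ≤ a 0 := hunroll N

theorem exp_neg_two_mul_le_one_div_sq {a : ℝ} (ha : 0 < 1 + a) :
    exp (-(2 * a)) ≤ 1 / (1 + a) ^ 2 := by
  rw [exp_neg, ← one_div, two_mul, exp_add, ← sq]
  gcongr
  linarith [add_one_le_exp a]

theorem one_sub_pow_mul_exp_le_prod_div_sq {x : ℝ} (hx : x ≤ 1) {a : ℕ → ℝ}
    (ha : ∀ n, 0 < 1 + a n) (k : ℕ) :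
    (1 - x) ^ k * exp (-(2 * ∑ j ∈ range k, a j)) ≤ ∏ j ∈ range k, (1 - x) / (1 + a j) ^ 2 := by
  rw [mul_sum, ← sum_neg_distrib, exp_sum, ← card_range k, ← prod_const, card_range,
    ← prod_mul_distrib]
  refine prod_le_prod (fun j _ => mul_nonneg (by linarith) (exp_pos _).le) fun j _ => ?_
  rw [← mul_one_div]
  exact mul_le_mul_of_nonneg_left (exp_neg_two_mul_le_one_div_sq (ha j)) (by linarith)

theorem mul_sq_div_four_le {ℓ w x : ℝ} (hℓ : 0 < ℓ) (hw : 0 < w) (hx : 0 ≤ x)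
    (h : x * ℓ * w ≤ 1) :
    ℓ * w ^ 2 / 4 ≤ (w + 1 / ℓ) / (1 + x * ℓ * w) * ℓ * w / (1 + x * ℓ * w) := by
  have hD : 1 ≤ 1 + x * ℓ * w := by have := mul_pos hℓ hw; nlinarith
  calc ℓ * w ^ 2 / 4 ≤ ℓ * w ^ 2 / (1 + x * ℓ * w) ^ 2 := by
        gcongr
        nlinarith
    _ = w / (1 + x * ℓ * w) * ℓ * w / (1 + x * ℓ * w) := by field_simp
    _ ≤ (w + 1 / ℓ) / (1 + x * ℓ * w) * ℓ * w / (1 + x * ℓ * w) := by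
        have := one_div_pos.2 hℓ
        gcongr
        linarith

theorem tendsto_rpow_mul_log_one_div_rpow_nhdsGT_zero {ε : ℝ} (hε : 0 < ε) (r : ℝ) :
    Tendsto (fun x => x ^ ε * log (1 / x) ^ r) (𝓝[>] 0) (𝓝 0) := by
  refine (isLittleO_abs_log_rpow_rpow_nhdsGT_zero r (neg_lt_zero.2 hε)).tendsto_div_nhds_zero.congr'
    ?_
  filter_upwards [Ioo_mem_nhdsGT one_pos] with x hx
  rw [abs_of_nonpos (log_nonpos hx.1.le hx.2.le), one_div, log_inv, rpow_neg hx.1.le,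
    div_inv_eq_mul, mul_comm]

theorem NAsymp.eventually_le {X : ℕ → ℝ} {a : ℝ} (h : NAsymp X a) :
    ∃ C q : ℝ, 0 ≤ C ∧ 0 ≤ q ∧ ∀ᶠ N : ℕ in atTop, X N ≤ C * (N : ℝ) ^ a * log N ^ q := by
  obtain ⟨c₁, c₂, _, c₂', N₀, hc₁, hc₁₂, -, h⟩ := h
  refine ⟨c₂, max c₂' 0, (hc₁.trans_le hc₁₂).le, le_max_right _ _, ?_⟩
  filter_upwards [eventually_gt_atTop N₀, eventually_ge_atTop 3] with N hN hN3
  have hlog : 1 ≤ log N := by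
    rw [le_log_iff_exp_le (by positivity)]
    have : (3 : ℝ) ≤ N := by exact_mod_cast hN3
    linarith [exp_one_lt_d9]
  calc X N ≤ c₂ * (N : ℝ) ^ a * log N ^ c₂' := (h N hN).2
    _ ≤ c₂ * (N : ℝ) ^ a * log N ^ max c₂' 0 := by
      have hc₂ : 0 ≤ c₂ * (N : ℝ) ^ a := by have := hc₁.trans_le hc₁₂; positivity
      gcongr
      exact le_max_left _ _

theorem ZeroAsymp.eventually_le {f : ℝ → ℝ} {a : ℝ} (h : ZeroAsymp f a) :
    ∃ C r : ℝ, ∀ᶠ x in 𝓝[>] 0, f x ≤ C * x ^ a * log (1 / x) ^ r := by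
  obtain ⟨_, c₂, _, c₂', x₀, -, -, -, hx₀, -, h⟩ := h
  refine ⟨c₂, c₂', ?_⟩
  filter_upwards [Ioo_mem_nhdsGT hx₀] with x hx
  exact (h x hx.1 hx.2).2

section FixedParameter

variable {L u : ℕ → ℝ} {x : ℝ}

/-- At `x = 0` the recursion reads `u n = u (n + 1) + 1 / L n`; for `x > 0` each step loses at most
a factor `exp (-x L_n u_{n+1})`, because `1 + t ≤ exp t`. -/
theorem tail_resistance_mul_exp_le (hL : ∀ n, 0 < L n) (hu : ∀ n, 0 < u n)
    (hrec : ∀ n, u n = (u (n + 1) + 1 / L n) / (1 + x * L n * u (n + 1))) (hx : 0 ≤ x)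
    (k n : ℕ) :
    (∑ m ∈ Ico n k, 1 / L m) * exp (-(x * ∑ m ∈ Ico n k, L m * u (m + 1))) ≤ u n := by
  induction hd : k - n generalizing n with
  | zero => simp [Ico_eq_empty_of_le (by omega : k ≤ n), (hu n).le]
  | succ d ih =>
    have hnk : n < k := by omega
    rw [sum_eq_sum_Ico_succ_bot hnk, sum_eq_sum_Ico_succ_bot hnk]
    set R := ∑ m ∈ Ico (n + 1) k, 1 / L m
    set T := ∑ m ∈ Ico (n + 1) k, L m * u (m + 1)
    set a := x * (L n * u (n + 1))
    have hT : 0 ≤ x * T := mul_nonneg hx (sum_nonneg fun m _ => (mul_pos (hL m) (hu _)).le)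
    have hr : 0 < 1 / L n := one_div_pos.2 (hL n)
    have ha : 0 < 1 + a := by have := mul_pos (hL n) (hu (n + 1)); positivity
    calc (1 / L n + R) * exp (-(x * (L n * u (n + 1) + T)))
        = (1 / L n * exp (-(x * T)) + R * exp (-(x * T))) * exp (-a) := by
          rw [mul_add x, neg_add, exp_add]; ring
      _ ≤ (1 / L n + u (n + 1)) * exp (-a) := by
          gcongr
          · exact mul_le_of_le_one_right hr.le (exp_le_one_iff.2 (neg_nonpos.2 hT))
          · exact ih (n + 1) (by omega)
      _ ≤ (1 / L n + u (n + 1)) / (1 + a) := by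
          rw [exp_neg, ← div_eq_mul_inv]
          gcongr
          · linarith [hu (n + 1)]
          · linarith [add_one_le_exp a]
      _ = u n := by rw [hrec n, add_comm (u (n + 1)), mul_assoc]

theorem exp_neg_one_mul_tail_resistance_le (hL : ∀ n, 0 < L n) (hu : ∀ n, 0 < u n)
    (hrec : ∀ n, u n = (u (n + 1) + 1 / L n) / (1 + x * L n * u (n + 1))) (hx : 0 ≤ x) {k : ℕ}
    (hS : x * ∑ j ∈ range k, L j * u (j + 1) ≤ 1) (n : ℕ) :
    exp (-1) * ∑ m ∈ Ico n k, 1 / L m ≤ u n := by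
  have hsub : x * ∑ m ∈ Ico n k, L m * u (m + 1) ≤ 1 := by
    refine le_trans (mul_le_mul_of_nonneg_left ?_ hx) hS
    refine sum_le_sum_of_subset_of_nonneg (fun m hm => ?_) fun m _ _ => (mul_pos (hL m) (hu _)).le
    exact mem_range.2 (mem_Ico.1 hm).2
  calc exp (-1) * ∑ m ∈ Ico n k, 1 / L m
      ≤ (∑ m ∈ Ico n k, 1 / L m) * exp (-(x * ∑ m ∈ Ico n k, L m * u (m + 1))) := by
        rw [mul_comm]
        gcongr
        exact sum_nonneg fun m _ => (one_div_pos.2 (hL m)).le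
    _ ≤ u n := tail_resistance_mul_exp_le hL hu hrec hx k n

theorem mul_sq_le_of_doubling (hL : ∀ n, 0 < L n) (hu : ∀ n, 0 < u n)
    (hrec : ∀ n, u n = (u (n + 1) + 1 / L n) / (1 + x * L n * u (n + 1))) (hx : 0 ≤ x) {k N : ℕ}
    (hS : x * ∑ j ∈ range k, L j * u (j + 1) ≤ 1) (hNk : N < k) (hkN : k ≤ 2 * N + 1) {c : ℝ}
    (hc : 0 ≤ c) (hdbl : ∑ n ∈ range (2 * N + 1), L n ≤ c * ∑ n ∈ range (N + 1), L n) :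
    x * ((k - (N + 1) : ℕ) : ℝ) ^ 2 ≤ c * exp 1 := by
  set ρ := ∑ m ∈ Ico (N + 1) k, 1 / L m
  set B := ∑ n ∈ range (N + 1), L n
  have hρ : 0 ≤ ρ := sum_nonneg fun m _ => (one_div_pos.2 (hL m)).le
  have hcard : ((k - (N + 1) : ℕ) : ℝ) ^ 2 ≤ c * B * ρ := by
    have h := sum_sq_le_sum_mul_sum_of_sq_le_mul (Ico (N + 1) k) (r := fun _ => (1 : ℝ))
      (fun m _ => (hL m).le) (fun m _ => (one_div_pos.2 (hL m)).le)
      (fun m _ => by rw [one_pow, mul_one_div_cancel (hL m).ne'])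
    rw [sum_const, Nat.card_Ico, nsmul_one] at h
    calc ((k - (N + 1) : ℕ) : ℝ) ^ 2 ≤ (∑ m ∈ Ico (N + 1) k, L m) * ρ := h
      _ ≤ (∑ n ∈ range (2 * N + 1), L n) * ρ := by
        refine mul_le_mul_of_nonneg_right
          (sum_le_sum_of_subset_of_nonneg (fun m hm => ?_) fun m _ _ => (hL m).le) hρ
        have := mem_Ico.1 hm
        exact mem_range.2 (by omega)
      _ ≤ c * B * ρ := by gcongr
  have hBρ : exp (-1) * (B * ρ) ≤ ∑ j ∈ range k, L j * u (j + 1) := by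
    calc exp (-1) * (B * ρ) = ∑ j ∈ range (N + 1), L j * (exp (-1) * ρ) := by
          rw [← sum_mul]; ring
      _ ≤ ∑ j ∈ range (N + 1), L j * u (j + 1) := by
          refine sum_le_sum fun j hj => mul_le_mul_of_nonneg_left ?_ (hL j).le
          refine le_trans ?_ (exp_neg_one_mul_tail_resistance_le hL hu hrec hx hS (j + 1))
          gcongr
          refine sum_le_sum_of_subset_of_nonneg (Ico_subset_Ico_left ?_) fun m _ _ =>
            (one_div_pos.2 (hL m)).le
          have := mem_range.1 hj
          omega
      _ ≤ ∑ j ∈ range k, L j * u (j + 1) :=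
          sum_le_sum_of_subset_of_nonneg (range_subset_range.2 hNk) fun j _ _ =>
            (mul_pos (hL j) (hu _)).le
  have hxBρ : x * (B * ρ) ≤ exp 1 := by
    have h := (mul_le_mul_of_nonneg_left hBρ hx).trans hS
    calc x * (B * ρ) = exp 1 * (x * (exp (-1) * (B * ρ))) := by
          rw [exp_neg]; field_simp
      _ ≤ exp 1 * 1 := by gcongr
      _ = exp 1 := mul_one _
  calc x * ((k - (N + 1) : ℕ) : ℝ) ^ 2 ≤ x * (c * B * ρ) := by gcongr
    _ = c * (x * (B * ρ)) := by ring
    _ ≤ c * exp 1 := by gcongr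

theorem mul_sq_le_of_doubling_half (hL : ∀ n, 0 < L n) (hu : ∀ n, 0 < u n)
    (hrec : ∀ n, u n = (u (n + 1) + 1 / L n) / (1 + x * L n * u (n + 1))) (hx : 0 ≤ x) {k : ℕ}
    (hS : x * ∑ j ∈ range k, L j * u (j + 1) ≤ 1) (hk : 3 ≤ k) {c : ℝ} (hc : 0 ≤ c)
    (hdbl : ∑ n ∈ range (2 * (k / 2) + 1), L n ≤ c * ∑ n ∈ range (k / 2 + 1), L n) :
    x * k ^ 2 ≤ 16 * c * exp 1 := by
  have hvol := mul_sq_le_of_doubling hL hu hrec hx hS (by omega) (by omega) hc hdbl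
  have hk4 : (k : ℝ) ≤ 4 * ((k - (k / 2 + 1) : ℕ) : ℝ) := by
    exact_mod_cast (by omega : k ≤ 4 * (k - (k / 2 + 1)))
  calc x * k ^ 2 ≤ x * (4 * ((k - (k / 2 + 1) : ℕ) : ℝ)) ^ 2 := by gcongr
    _ = 16 * (x * ((k - (k / 2 + 1) : ℕ) : ℝ) ^ 2) := by ring
    _ ≤ 16 * c * exp 1 := by linarith

theorem one_sub_pow_mul_exp_neg_two_le (hL : ∀ n, 0 < L n) (hu : ∀ n, 0 < u n)
    (hrec : ∀ n, u n = (u (n + 1) + 1 / L n) / (1 + x * L n * u (n + 1))) (hx₀ : 0 ≤ x)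
    (hx₁ : x ≤ 1) {v : ℕ → ℝ} (hv : ∀ n, 0 ≤ v n)
    (hvrec : ∀ n, v n = (1 - x) / (1 + x * L n * u (n + 1)) ^ 2 * v (n + 1) +
      u n * L n * u (n + 1) / (1 + x * L n * u (n + 1)))
    {k : ℕ} (hS : x * ∑ j ∈ range k, L j * u (j + 1) = 1) :
    (1 - x) ^ k * exp (-2) ≤ 4 * x ^ 2 * (∑ j ∈ range k, L j) * v 0 := by
  set a : ℕ → ℝ := fun n => x * L n * u (n + 1)
  have ha : ∀ n, 0 ≤ a n := fun n => mul_nonneg (mul_nonneg hx₀ (hL n).le) (hu _).le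
  have hsum_a : ∑ j ∈ range k, a j = 1 := by simp only [a, mul_assoc, ← mul_sum, hS]
  set P := ∑ m ∈ range k, L m * u (m + 1) ^ 2
  have hP : 0 ≤ P := sum_nonneg fun m _ => mul_nonneg (hL m).le (sq_nonneg _)
  have hprod : (1 - x) ^ k * exp (-2) ≤ ∏ j ∈ range k, (1 - x) / (1 + a j) ^ 2 := by
    have h := one_sub_pow_mul_exp_le_prod_div_sq hx₁ (a := a) (fun n => by linarith [ha n]) k
    rwa [hsum_a, mul_one] at h
  have hterm : P / 4 ≤ ∑ m ∈ range k, u m * L m * u (m + 1) / (1 + a m) := by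
    rw [sum_div]
    refine sum_le_sum fun m hm => ?_
    rw [hrec m]
    exact mul_sq_div_four_le (hL m) (hu _) hx₀ (hsum_a ▸ single_le_sum (fun j _ => ha j) hm)
  have hunroll := prod_mul_sum_le_of_mul_add_le (a := v) (q := fun n => (1 - x) / (1 + a n) ^ 2)
    (b := fun n => u n * L n * u (n + 1) / (1 + a n))
    (fun n => div_nonneg (by linarith) (sq_nonneg _))
    (fun n => div_le_one_of_le₀ (by nlinarith [ha n]) (sq_nonneg _)) hv
    (fun n => by have := ha n; have := hu n; have := hL n; have := hu (n + 1); positivity)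
    (fun n => (hvrec n).ge) k
  have hCS : 1 ≤ x ^ 2 * (∑ j ∈ range k, L j) * P := by
    have h := sum_sq_le_sum_mul_sum_of_sq_le_mul (range k) (r := fun j => L j * u (j + 1))
      (f := L) (g := fun j => L j * u (j + 1) ^ 2) (fun j _ => (hL j).le)
      (fun j _ => mul_nonneg (hL j).le (sq_nonneg _)) (fun j _ => by ring_nf; rfl)
    calc (1 : ℝ) = (x * ∑ j ∈ range k, L j * u (j + 1)) ^ 2 := by rw [hS, one_pow]
      _ ≤ x ^ 2 * (∑ j ∈ range k, L j) * P := by rw [mul_pow, mul_assoc]; gcongr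
  have hQ₀ : 0 ≤ (1 - x) ^ k * exp (-2) :=
    mul_nonneg (pow_nonneg (by linarith) k) (exp_pos _).le
  have hB₀ : 0 ≤ 4 * x ^ 2 * ∑ j ∈ range k, L j := by
    have := sum_nonneg fun j (_ : j ∈ range k) => (hL j).le; positivity
  calc (1 - x) ^ k * exp (-2) ≤ (1 - x) ^ k * exp (-2) * (x ^ 2 * (∑ j ∈ range k, L j) * P) :=
        le_mul_of_one_le_right hQ₀ hCS
    _ = 4 * x ^ 2 * (∑ j ∈ range k, L j) * ((1 - x) ^ k * exp (-2) * (P / 4)) := by ring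
    _ ≤ 4 * x ^ 2 * (∑ j ∈ range k, L j) *
          ((∏ j ∈ range k, (1 - x) / (1 + a j) ^ 2) *
            ∑ m ∈ range k, u m * L m * u (m + 1) / (1 + a m)) := by gcongr
    _ ≤ 4 * x ^ 2 * (∑ j ∈ range k, L j) * v 0 := by gcongr

end FixedParameter

theorem neg_deriv_eq_of_eventuallyEq_rec {f g : ℝ → ℝ} {f' g' ℓ x : ℝ} (hℓ : ℓ ≠ 0)
    (hD : 1 + x * ℓ * g x ≠ 0) (hf : HasDerivAt f f' x) (hg : HasDerivAt g g' x)
    (hfg : f =ᶠ[𝓝 x] fun y => (g y + 1 / ℓ) / (1 + y * ℓ * g y)) :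
    -f' = (1 - x) / (1 + x * ℓ * g x) ^ 2 * -g' + f x * ℓ * g x / (1 + x * ℓ * g x) := by
  have hquot := (hg.add_const (1 / ℓ)).div
    ((((hasDerivAt_id x).mul_const ℓ).mul hg).const_add 1) hD
  rw [hf.unique (hquot.congr_of_eventuallyEq hfg), hfg.eq_of_nhds]
  simp only [id, Pi.mul_apply]
  field_simp
  ring

theorem mul_sq_mul_le_rpow_mul_log_rpow {A B x N C CA CB α d r q : ℝ} (hx₀ : 0 < x) (hx₁ : x < 1)
    (hN : 1 ≤ N) (hxN : x * N ≤ 1) (hxN2 : x * N ^ 2 ≤ C) (hd : 0 ≤ d) (hq : 0 ≤ q)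
    (hCB : 0 ≤ CB) (hA₀ : 0 ≤ A) (hA : A ≤ CA * x ^ α * log (1 / x) ^ r) (hB₀ : 0 ≤ B)
    (hB : B ≤ CB * N ^ d * log N ^ q) :
    A * x ^ 2 * B ≤ CA * CB * C ^ (d / 2) * (x ^ (α + 2 - d / 2) * log (1 / x) ^ (r + q)) := by
  have hW : 0 < log (1 / x) := log_pos (by rw [lt_div_iff₀ hx₀]; linarith)
  have hlogN : log N ≤ log (1 / x) := log_le_log (by linarith) (by rw [le_div_iff₀ hx₀]; linarith)
  have hC : 0 ≤ C := le_trans (by positivity) hxN2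
  have hNd : N ^ d ≤ C ^ (d / 2) * x ^ (-(d / 2)) := by
    calc N ^ d = (N ^ 2) ^ (d / 2) := by
          rw [← rpow_natCast, ← rpow_mul (by linarith)]; congr 1; ring
      _ ≤ (C / x) ^ (d / 2) := by
          gcongr
          rw [le_div_iff₀ hx₀]; linarith
      _ = C ^ (d / 2) * x ^ (-(d / 2)) := by
          rw [div_rpow hC hx₀.le, rpow_neg hx₀.le, div_eq_mul_inv]
  calc A * x ^ 2 * B
      ≤ (CA * x ^ α * log (1 / x) ^ r) * x ^ 2 * (CB * (C ^ (d / 2) * x ^ (-(d / 2))) *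
          log (1 / x) ^ q) := by
        have := hA₀.trans hA
        gcongr
        calc B ≤ CB * N ^ d * log N ^ q := hB
          _ ≤ _ := by have := log_nonneg hN; gcongr
    _ = CA * CB * C ^ (d / 2) * (x ^ (α + 2 - d / 2) * log (1 / x) ^ (r + q)) := by
        rw [sub_eq_add_neg, rpow_add hx₀, rpow_add hx₀, rpow_add hW, rpow_two]
        ring

theorem mul_le_and_exp_neg_two_le_of_crossing {L : ℕ → ℝ} {η η' : ℕ → ℝ → ℝ}
    (hL : ∀ n, 0 < L n) (hpos : ∀ n, ∀ x ∈ Set.Ioo (0 : ℝ) 1, 0 < η n x)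
    (hderiv : ∀ n, ∀ x ∈ Set.Ioo (0 : ℝ) 1, HasDerivAt (η n) (η' n x) x)
    (hmono : ∀ n, ∀ x ∈ Set.Ioo (0 : ℝ) 1, η' n x ≤ 0)
    (hrec : ∀ n, ∀ x ∈ Set.Ioo (0 : ℝ) 1,
      η n x = (η (n + 1) x + 1 / L n) / (1 + x * L n * η (n + 1) x))
    {c : ℝ} (hc : 0 ≤ c) {k : ℕ} (hk : 3 ≤ k) (hkc : 32 * c * exp 1 ≤ k)
    (hdbl : ∑ n ∈ range (2 * (k / 2) + 1), L n ≤ c * ∑ n ∈ range (k / 2 + 1), L n)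
    {x : ℝ} (hx : x ∈ Set.Ioo (0 : ℝ) 1) (hS : x * ∑ j ∈ range k, L j * η (j + 1) x = 1) :
    x * k ≤ 1 ∧ x * k ^ 2 ≤ 16 * c * exp 1 ∧
      exp (-2) ≤ 8 * (|η' 0 x| * x ^ 2 * ∑ n ∈ range (k + 1), L n) := by
  have hu : ∀ n, 0 < η n x := fun n => hpos n x hx
  have hrec' : ∀ n, η n x = (η (n + 1) x + 1 / L n) / (1 + x * L n * η (n + 1) x) :=
    fun n => hrec n x hx
  have hvrec : ∀ n, -η' n x = (1 - x) / (1 + x * L n * η (n + 1) x) ^ 2 * -η' (n + 1) x +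
      η n x * L n * η (n + 1) x / (1 + x * L n * η (n + 1) x) := fun n =>
    have := mul_pos (mul_pos hx.1 (hL n)) (hu (n + 1))
    neg_deriv_eq_of_eventuallyEq_rec (hL n).ne' (by positivity) (hderiv n x hx)
      (hderiv (n + 1) x hx) (eventually_of_mem (Ioo_mem_nhds hx.1 hx.2) fun y hy => hrec n y hy)
  have hxk2 : x * k ^ 2 ≤ 16 * c * exp 1 :=
    mul_sq_le_of_doubling_half hL hu hrec' hx.1.le hS.le hk hc hdbl
  have hxk : x * k ≤ 1 / 2 := by
    have hk₀ : (0 : ℝ) < k := by exact_mod_cast (by omega : 0 < k)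
    nlinarith
  have hpow : 1 / 2 ≤ (1 - x) ^ k := by
    have := one_add_mul_le_pow (a := -x) (by linarith [hx.2]) k
    rw [← sub_eq_add_neg] at this
    linarith
  have hmain := one_sub_pow_mul_exp_neg_two_le hL hu hrec' hx.1.le hx.2.le
    (fun n => neg_nonneg.2 (hmono n x hx)) hvrec hS
  have hB : ∑ j ∈ range k, L j ≤ ∑ n ∈ range (k + 1), L n := by
    rw [sum_range_succ]; linarith [hL k]
  refine ⟨by linarith, hxk2, ?_⟩
  calc exp (-2) ≤ 2 * ((1 - x) ^ k * exp (-2)) := by nlinarith [exp_pos (-2)]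
    _ ≤ 8 * (-η' 0 x * x ^ 2 * ∑ j ∈ range k, L j) := by linarith
    _ ≤ 8 * (|η' 0 x| * x ^ 2 * ∑ n ∈ range (k + 1), L n) := by
      have := sum_nonneg fun j (_ : j ∈ range k) => (hL j).le
      gcongr
      exact neg_le_abs _

theorem stmt_11_general (L : ℕ → ℝ) (hL : ∀ n : ℕ, 1 ≤ L n)
    (c : ℝ) (hc : 1 < c) (N₀ : ℕ)
    (hdbl : ∀ N : ℕ, N₀ < N →
      (∑ n ∈ Finset.range (2*N+1), L n) ≤ c * ∑ n ∈ Finset.range (N+1), L n)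
    (dH : ℝ) (hdH2 : 2 ≤ dH)
    (hB : NAsymp (fun N => ∑ n ∈ Finset.range (N+1), L n) dH)
    (η η' : ℕ → ℝ → ℝ)
    (hderiv : ∀ (n : ℕ), ∀ x ∈ Set.Ioo (0:ℝ) 1, HasDerivAt (η n) (η' n x) x)
    (hmono : ∀ (n : ℕ), ∀ x ∈ Set.Ioo (0:ℝ) 1, η' n x ≤ 0)
    (hrec : ∀ (n : ℕ), ∀ x ∈ Set.Ioo (0:ℝ) 1,
      η n x = (η (n+1) x + 1 / L n) / (1 + x * L n * η (n+1) x))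
    (hbnd : ∀ (n : ℕ), ∀ x ∈ Set.Ioo (0:ℝ) 1,
      1 / L n ≤ η n x ∧ η n x ≤ x ^ (-(1:ℝ)/2))
    (xs : ℕ → ℝ) (K : ℕ)
    (hxs : ∀ k : ℕ, K ≤ k → xs k ∈ Set.Ioo (0:ℝ) 1 ∧
      xs k * ∑ j ∈ Finset.range k, L j * η (j+1) (xs k) = 1)
    (hxs0 : Filter.Tendsto xs Filter.atTop (nhds 0))
    (ds : ℝ) (hds : ZeroAsymp (fun x => |η' 0 x|) (-2 + ds/2)) :
    ds ≤ dH := by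
  by_contra! hlt
  have hLpos : ∀ n, 0 < L n := fun n => one_pos.trans_le (hL n)
  have hpos : ∀ n, ∀ x ∈ Set.Ioo (0 : ℝ) 1, 0 < η n x := fun n x hx =>
    (one_div_pos.2 (hLpos n)).trans_le (hbnd n x hx).1
  obtain ⟨Cη, r, hη'⟩ := hds.eventually_le
  obtain ⟨CB, q, hCB, hq, hB'⟩ := hB.eventually_le
  have hxs' : Tendsto xs atTop (𝓝[>] 0) := tendsto_nhdsWithin_iff.2
    ⟨hxs0, eventually_atTop.2 ⟨K, fun k hk => (hxs k hk).1.1⟩⟩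
  set M := Cη * CB * (16 * c * exp 1) ^ (dH / 2)
  have hε : 0 < -2 + ds / 2 + 2 - dH / 2 := by linarith
  set ε := -2 + ds / 2 + 2 - dH / 2
  have hbound : ∀ᶠ k : ℕ in atTop, exp (-2) ≤ 8 * (M * (xs k ^ ε * log (1 / xs k) ^ (r + q))) := by
    filter_upwards [eventually_ge_atTop K, eventually_gt_atTop (2 * N₀ + 1),
      eventually_ge_atTop 3, eventually_ge_atTop ⌈32 * c * exp 1⌉₊, hxs'.eventually hη', hB']
      with k hkK hkN₀ hk3 hkc hηk hBk
    obtain ⟨hx, hS⟩ := hxs k hkK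
    obtain ⟨hxk, hxk2, hexp⟩ := mul_le_and_exp_neg_two_le_of_crossing hLpos hpos hderiv hmono
      hrec (by linarith) hk3 (Nat.ceil_le.1 hkc) (hdbl _ (by omega)) hx hS
    refine hexp.trans (mul_le_mul_of_nonneg_left ?_ (by norm_num : (0 : ℝ) ≤ 8))
    exact mul_sq_mul_le_rpow_mul_log_rpow hx.1 hx.2 (by exact_mod_cast (by omega : 1 ≤ k)) hxk hxk2
      (by linarith) hq hCB (abs_nonneg _) hηk (sum_nonneg fun n _ => (hLpos n).le) hBk
  have hlim : Tendsto (fun k => 8 * (M * (xs k ^ ε * log (1 / xs k) ^ (r + q)))) atTop (𝓝 0) := by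
    simpa using ((tendsto_rpow_mul_log_one_div_rpow_nhdsGT_zero hε (r + q)).comp
      hxs').const_mul M |>.const_mul 8
  exact (exp_pos (-2)).not_ge (ge_of_tendsto hlim hbound)

/-- Theorem 6 of the paper: for a multigraph on the half line with volume doubling,
Hausdorff dimension `2 ≤ d_H < 4`, and spectral dimension `d_s` (in the sense of
`|η_0'(x)| ∼ x^{-2+d_s/2}`), one has `d_s ≤ d_H`. -/
theorem stmt_11 (L : ℕ → ℝ) (hL : ∀ n : ℕ, 1 ≤ L n)
    (c : ℝ) (hc : 1 < c) (N₀ : ℕ)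
    (hdbl : ∀ N : ℕ, N₀ < N →
      (∑ n ∈ Finset.range (2*N+1), L n) ≤ c * ∑ n ∈ Finset.range (N+1), L n)
    (dH : ℝ) (hdH2 : 2 ≤ dH) (hdH4 : dH < 4)
    (hB : NAsymp (fun N => ∑ n ∈ Finset.range (N+1), L n) dH)
    (η η' : ℕ → ℝ → ℝ)
    (hderiv : ∀ (n : ℕ), ∀ x ∈ Set.Ioo (0:ℝ) 1, HasDerivAt (η n) (η' n x) x)
    (hmono : ∀ (n : ℕ), ∀ x ∈ Set.Ioo (0:ℝ) 1, η' n x ≤ 0)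
    (hrec : ∀ (n : ℕ), ∀ x ∈ Set.Ioo (0:ℝ) 1,
      η n x = (η (n+1) x + 1 / L n) / (1 + x * L n * η (n+1) x))
    (hbnd : ∀ (n : ℕ), ∀ x ∈ Set.Ioo (0:ℝ) 1,
      1 / L n ≤ η n x ∧ η n x ≤ x ^ (-(1:ℝ)/2))
    (xs : ℕ → ℝ) (K : ℕ)
    (hxs : ∀ k : ℕ, K ≤ k → xs k ∈ Set.Ioo (0:ℝ) 1 ∧
      xs k * ∑ j ∈ Finset.range k, L j * η (j+1) (xs k) = 1)
    (hxs0 : Filter.Tendsto xs Filter.atTop (nhds 0))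
    (ds : ℝ) (hds : ZeroAsymp (fun x => |η' 0 x|) (-2 + ds/2)) :
    ds ≤ dH :=
  stmt_11_general L hL c hc N₀ hdbl dH hdH2 hB η η' hderiv hmono hrec hbnd xs K hxs hxs0 ds hds
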